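/- Let S be a finite set of N methods, and let ε ∈ (0,1). For each i ∈ S let q_i, r_i ∈ (0,1) and c_i ∈ [0,1], and suppose (1−ε) ≤ q_i/r_i ≤ (1+ε) and (1−ε) ≤ (1−q_i)/(1−r_i) ≤ (1+ε) for all i. Define the weight w(T) := (∏_{i∈T} c_i)·(∏_{i∈S∖T} (1−c_i)) for each T ⊆ S, the deterministic probability P(T) := 1/(1 + (∏_{i∈T} q_i/r_i)·(∏_{i∈S∖T} (1−q_i)/(1−r_i))), the exact probability Ex := Σ_{T⊆S} w(T)·P(T), and the approximate probability Ap := 1/(1 + ∏_{i∈S} (q_i/r_i)^{c_i}·((1−q_i)/(1−r_i))^{1−c_i}). Then 1/(1+(1+ε)^N) ≤ Ex ≤ 1/(1+(1−ε)^N) and 1/(1+(1+ε)^N) ≤ Ap ≤ 1/(1+(1−ε)^N); consequently |Ex − Ap| ≤ 1/(1+(1−ε)^N) − 1/(1+(1+ε)^N) and max{Ex/Ap, Ap/Ex} ≤ (1+(1+ε)^N)/(1+(1−ε)^N). -/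

import Mathlib

/-!
Write `ρᵢ = qᵢ/rᵢ` and `σᵢ = (1-qᵢ)/(1-rᵢ)`, both in `[1-ε, 1+ε]`. For each pattern `T` the odds
`∏_{T} ρᵢ ∏_{S∖T} σᵢ` is a product of `N` factors in `[1-ε, 1+ε]`, as is the approximate odds
`∏ ρᵢ^{cᵢ} σᵢ^{1-cᵢ}` (each factor is a weighted geometric mean of two numbers in that interval).
Since `x ↦ 1/(1+x)` is antitone, every `P(T)` and `Ap` lies in `[1/(1+(1+ε)^N), 1/(1+(1-ε)^N)]`;
the weights `w(T)` are the terms of the expansion of `∏ (cᵢ + (1-cᵢ)) = 1`, so `Ex` is a convex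
combination of the `P(T)` and lies there too. Two numbers in a common interval differ by at most its
length, and their ratio is at most the ratio of its endpoints.
-/

open Finset

section OrderedSemiring

variable {ι R : Type*} [CommSemiring R] [PartialOrder R] [IsOrderedRing R]

theorem Finset.prod_mem_Icc_pow (s : Finset ι) {f : ι → R} {a b : R} (ha : 0 ≤ a)
    (hf : ∀ i ∈ s, f i ∈ Set.Icc a b) : ∏ i ∈ s, f i ∈ Set.Icc (a ^ s.card) (b ^ s.card) := by
  constructor
  · calc a ^ s.card = ∏ _i ∈ s, a := (prod_const a).symm
      _ ≤ ∏ i ∈ s, f i := prod_le_prod (fun _ _ => ha) fun i hi => (hf i hi).1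
  · calc ∏ i ∈ s, f i ≤ ∏ _i ∈ s, b :=
          prod_le_prod (fun i hi => ha.trans (hf i hi).1) fun i hi => (hf i hi).2
      _ = b ^ s.card := prod_const b

theorem Finset.prod_mul_prod_sdiff_mem_Icc_pow [DecidableEq ι] {s t : Finset ι} (hts : t ⊆ s)
    {f g : ι → R} {a b : R} (ha : 0 ≤ a) (hf : ∀ i ∈ s, f i ∈ Set.Icc a b)
    (hg : ∀ i ∈ s, g i ∈ Set.Icc a b) :
    (∏ i ∈ t, f i) * ∏ i ∈ s \ t, g i ∈ Set.Icc (a ^ s.card) (b ^ s.card) := by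
  have hsplit := prod_piecewise s t f g
  rw [inter_eq_right.mpr hts] at hsplit
  rw [← hsplit]
  refine s.prod_mem_Icc_pow ha fun i hi => ?_
  by_cases hit : i ∈ t
  · simpa only [piecewise_eq_of_mem _ _ _ hit] using hf i hi
  · simpa only [piecewise_eq_of_notMem _ _ _ hit] using hg i hi

end OrderedSemiring

theorem Finset.sum_powerset_prod_mul_prod_sdiff_one_sub {ι R : Type*} [CommRing R] [DecidableEq ι]
    (s : Finset ι) (c : ι → R) :
    ∑ t ∈ s.powerset, (∏ i ∈ t, c i) * ∏ i ∈ s \ t, (1 - c i) = 1 := by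
  rw [← prod_add]
  simp

theorem Real.rpow_mul_rpow_one_sub_mem_Icc {x y a b c : ℝ} (ha : 0 ≤ a)
    (hx : x ∈ Set.Icc a b) (hy : y ∈ Set.Icc a b) (hc : c ∈ Set.Icc 0 1) :
    x ^ c * y ^ (1 - c) ∈ Set.Icc a b := by
  have hc' : 0 ≤ 1 - c := sub_nonneg.mpr hc.2
  have hb : 0 ≤ b := ha.trans (hx.1.trans hx.2)
  have split (z : ℝ) (hz : 0 ≤ z) : z = z ^ c * z ^ (1 - c) := by
    rw [← Real.rpow_add' hz (by norm_num), add_sub_cancel, Real.rpow_one]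
  constructor
  · calc a = a ^ c * a ^ (1 - c) := split a ha
      _ ≤ x ^ c * y ^ (1 - c) :=
        mul_le_mul (Real.rpow_le_rpow ha hx.1 hc.1) (Real.rpow_le_rpow ha hy.1 hc')
          (Real.rpow_nonneg ha _) (Real.rpow_nonneg (ha.trans hx.1) _)
  · calc x ^ c * y ^ (1 - c) ≤ b ^ c * b ^ (1 - c) :=
        mul_le_mul (Real.rpow_le_rpow (ha.trans hx.1) hx.2 hc.1)
          (Real.rpow_le_rpow (ha.trans hy.1) hy.2 hc')
          (Real.rpow_nonneg (ha.trans hy.1) _) (Real.rpow_nonneg hb _)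
      _ = b := (split b hb).symm

section OrderedField

variable {K : Type*} [Field K] [LinearOrder K] [IsStrictOrderedRing K]

theorem one_div_one_add_mem_Icc {x a b : K} (ha : 0 ≤ a) (hx : x ∈ Set.Icc a b) :
    1 / (1 + x) ∈ Set.Icc (1 / (1 + b)) (1 / (1 + a)) :=
  have hx0 : 0 ≤ x := ha.trans hx.1
  ⟨one_div_le_one_div_of_le (by linarith) (by linarith [hx.2]),
    one_div_le_one_div_of_le (by linarith) (by linarith [hx.1])⟩

theorem max_div_div_le_of_mem_Icc {x y a b : K} (ha : 0 < a) (hx : x ∈ Set.Icc a b)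
    (hy : y ∈ Set.Icc a b) : max (x / y) (y / x) ≤ b / a :=
  have hb : 0 ≤ b := ha.le.trans (hx.1.trans hx.2)
  max_le (div_le_div₀ hb hx.2 ha hy.1) (div_le_div₀ hb hy.2 ha hx.1)

end OrderedField

theorem stmt8_general {ι : Type*} [DecidableEq ι] (S : Finset ι) (ε : ℝ)
    (hε : ε ∈ Set.Ioo (0:ℝ) 1)
    (q r c : ι → ℝ)
    (hc : ∀ i ∈ S, c i ∈ Set.Icc (0:ℝ) 1)
    (hratio1 : ∀ i ∈ S, q i / r i ∈ Set.Icc (1 - ε) (1 + ε))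
    (hratio2 : ∀ i ∈ S, (1 - q i) / (1 - r i) ∈ Set.Icc (1 - ε) (1 + ε))
    (w P : Finset ι → ℝ)
    (hw : ∀ T ∈ S.powerset, w T = (∏ i ∈ T, c i) * ∏ i ∈ S \ T, (1 - c i))
    (hP : ∀ T ∈ S.powerset, P T =
      1 / (1 + (∏ i ∈ T, q i / r i) * ∏ i ∈ S \ T, (1 - q i) / (1 - r i)))
    (Ex Ap : ℝ)
    (hEx : Ex = ∑ T ∈ S.powerset, w T * P T)
    (hAp : Ap = 1 / (1 + ∏ i ∈ S, (q i / r i) ^ (c i) * ((1 - q i) / (1 - r i)) ^ (1 - c i))) :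
    Ex ∈ Set.Icc (1 / (1 + (1 + ε) ^ S.card)) (1 / (1 + (1 - ε) ^ S.card)) ∧
    Ap ∈ Set.Icc (1 / (1 + (1 + ε) ^ S.card)) (1 / (1 + (1 - ε) ^ S.card)) ∧
    |Ex - Ap| ≤ 1 / (1 + (1 - ε) ^ S.card) - 1 / (1 + (1 + ε) ^ S.card) ∧
    max (Ex / Ap) (Ap / Ex) ≤ (1 + (1 + ε) ^ S.card) / (1 + (1 - ε) ^ S.card) := by
  have h1ε : 0 ≤ 1 - ε := sub_nonneg.mpr hε.2.le
  have hpow : 0 ≤ (1 - ε) ^ S.card := pow_nonneg h1ε _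
  have hlow : 0 < 1 / (1 + (1 + ε) ^ S.card) :=
    one_div_pos.mpr (add_pos_of_pos_of_nonneg one_pos (pow_nonneg (by linarith [hε.1]) _))
  set I := Set.Icc (1 / (1 + (1 + ε) ^ S.card)) (1 / (1 + (1 - ε) ^ S.card))
  have hPT : ∀ T ∈ S.powerset, P T ∈ I := fun T hT => by
    rw [hP T hT]
    exact one_div_one_add_mem_Icc hpow
      (prod_mul_prod_sdiff_mem_Icc_pow (mem_powerset.mp hT) h1ε hratio1 hratio2)
  have hExI : Ex ∈ I := by
    rw [hEx]
    refine (convex_Icc (𝕜 := ℝ) _ _).sum_mem (fun T hT => ?_) ?_ hPT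
    · rw [hw T hT]
      exact mul_nonneg (prod_nonneg fun i hi => (hc i (mem_powerset.mp hT hi)).1)
        (prod_nonneg fun i hi => sub_nonneg.mpr (hc i (mem_sdiff.mp hi).1).2)
    · rw [sum_congr rfl hw, sum_powerset_prod_mul_prod_sdiff_one_sub]
  have hApI : Ap ∈ I := by
    rw [hAp]
    exact one_div_one_add_mem_Icc hpow <| S.prod_mem_Icc_pow h1ε fun i hi =>
      Real.rpow_mul_rpow_one_sub_mem_Icc h1ε (hratio1 i hi) (hratio2 i hi) (hc i hi)
  refine ⟨hExI, hApI, abs_sub_le_of_le_of_le hExI.1 hExI.2 hApI.1 hApI.2, ?_⟩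
  calc max (Ex / Ap) (Ap / Ex)
      ≤ (1 / (1 + (1 - ε) ^ S.card)) / (1 / (1 + (1 + ε) ^ S.card)) :=
        max_div_div_le_of_mem_Icc hlow hExI hApI
    _ = (1 + (1 + ε) ^ S.card) / (1 + (1 - ε) ^ S.card) := div_div_div_cancel_left' _ _ one_ne_zero

theorem stmt8 {ι : Type*} [DecidableEq ι] (S : Finset ι) (ε : ℝ)
    (hε : ε ∈ Set.Ioo (0:ℝ) 1)
    (q r c : ι → ℝ)
    (hq : ∀ i ∈ S, q i ∈ Set.Ioo (0:ℝ) 1)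
    (hr : ∀ i ∈ S, r i ∈ Set.Ioo (0:ℝ) 1)
    (hc : ∀ i ∈ S, c i ∈ Set.Icc (0:ℝ) 1)
    (hratio1 : ∀ i ∈ S, q i / r i ∈ Set.Icc (1 - ε) (1 + ε))
    (hratio2 : ∀ i ∈ S, (1 - q i) / (1 - r i) ∈ Set.Icc (1 - ε) (1 + ε))
    (w P : Finset ι → ℝ)
    (hw : ∀ T ∈ S.powerset, w T = (∏ i ∈ T, c i) * ∏ i ∈ S \ T, (1 - c i))
    (hP : ∀ T ∈ S.powerset, P T =
      1 / (1 + (∏ i ∈ T, q i / r i) * ∏ i ∈ S \ T, (1 - q i) / (1 - r i)))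
    (Ex Ap : ℝ)
    (hEx : Ex = ∑ T ∈ S.powerset, w T * P T)
    (hAp : Ap = 1 / (1 + ∏ i ∈ S, (q i / r i) ^ (c i) * ((1 - q i) / (1 - r i)) ^ (1 - c i))) :
    Ex ∈ Set.Icc (1 / (1 + (1 + ε) ^ S.card)) (1 / (1 + (1 - ε) ^ S.card)) ∧
    Ap ∈ Set.Icc (1 / (1 + (1 + ε) ^ S.card)) (1 / (1 + (1 - ε) ^ S.card)) ∧
    |Ex - Ap| ≤ 1 / (1 + (1 - ε) ^ S.card) - 1 / (1 + (1 + ε) ^ S.card) ∧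
    max (Ex / Ap) (Ap / Ex) ≤ (1 + (1 + ε) ^ S.card) / (1 + (1 - ε) ^ S.card) :=
  stmt8_general S ε hε q r c hc hratio1 hratio2 w P hw hP Ex Ap hEx hAp
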